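/- Let A, B be bounded linear operators on a complex Hilbert space H and r ≥ 1. Then ω^{2r}(B*A) ≤ (1/2)‖|A|^{4r} + |B|^{4r}‖, where ω is the numerical radius. -/

import Mathlib

set_option synthInstance.maxHeartbeats 1000000
set_option maxHeartbeats 1000000

open scoped InnerProductSpace

noncomputable def opAbs {H : Type*} [NormedAddCommGroup H] [InnerProductSpace ℂ H]
    [CompleteSpace H] (T : H →L[ℂ] H) : H →L[ℂ] H :=
  CFC.sqrt ((ContinuousLinearMap.adjoint T) * T)

noncomputable def numRadius {H : Type*} [NormedAddCommGroup H] [InnerProductSpace ℂ H]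
    (T : H →L[ℂ] H) : ℝ :=
  ⨆ x : {y : H // ‖y‖ = 1}, ‖⟪T (x : H), (x : H)⟫_ℂ‖

/-!
By Cauchy–Schwarz, `|⟪B†A x, x⟫| ≤ ‖A x‖ ‖B x‖`, and `‖A x‖² = ⟪A†A x, x⟫`; AM–GM then bounds
`|⟪B†A x, x⟫|^(2r)` by the mean of `⟪A†A x, x⟫^(2r)` and `⟪B†B x, x⟫^(2r)`. The
Hölder–McCarthy inequality `⟪T x, x⟫^p ≤ ⟪T^p x, x⟫` (positive `T`, unit `x`, `p ≥ 1`), obtained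
by applying the functional calculus to the tangent line of `t ↦ t^p` at `t = ⟪T x, x⟫`, turns
these into `⟪|A|^(4r) x, x⟫` and `⟪|B|^(4r) x, x⟫`, whose sum is at most `‖|A|^(4r) + |B|^(4r)‖`.
-/

open ContinuousLinearMap RCLike

theorem Real.add_mul_sub_le_rpow {s t p : ℝ} (hs : 0 ≤ s) (ht : 0 ≤ t) (hp : 1 ≤ p) :
    s ^ p + p * s ^ (p - 1) * (t - s) ≤ t ^ p := by
  rcases hs.eq_or_lt with rfl | hs
  · rcases hp.eq_or_lt with rfl | hp
    · simp
    · simp [Real.zero_rpow (by linarith : p ≠ 0), Real.zero_rpow (by linarith : p - 1 ≠ 0),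
        Real.rpow_nonneg ht]
  · have bernoulli := one_add_mul_self_le_rpow_one_add (by linarith [div_nonneg ht hs.le] :
      -1 ≤ t / s - 1) hp
    rw [add_sub_cancel, Real.div_rpow ht hs.le, le_div_iff₀ (by positivity)] at bernoulli
    calc s ^ p + p * s ^ (p - 1) * (t - s) = (1 + p * (t / s - 1)) * s ^ p := by
          rw [Real.rpow_sub_one hs.ne']; field_simp
      _ ≤ t ^ p := bernoulli

theorem Real.mul_rpow_le_sq_rpow_add_sq_rpow_div_two {a b q : ℝ} (ha : 0 ≤ a) (hb : 0 ≤ b) :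
    (a * b) ^ q ≤ ((a ^ 2) ^ q + (b ^ 2) ^ q) / 2 := by
  have hsq (c : ℝ) (hc : 0 ≤ c) : (c ^ 2) ^ q = (c ^ q) ^ 2 := by
    rw [← Real.rpow_natCast, ← Real.rpow_natCast, ← Real.rpow_mul hc, ← Real.rpow_mul hc,
      mul_comm]
  rw [Real.mul_rpow ha hb, hsq a ha, hsq b hb]
  nlinarith [sq_nonneg (a ^ q - b ^ q)]

section CStarAlgebra

variable {A : Type*} [CStarAlgebra A] [PartialOrder A] [StarOrderedRing A]

theorem CFC.smul_add_algebraMap_le_rpow {a : A} (ha : 0 ≤ a) {s p : ℝ} (hs : 0 ≤ s)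
    (hp : 1 ≤ p) :
    (p * s ^ (p - 1)) • a + algebraMap ℝ A (s ^ p - p * s ^ (p - 1) * s) ≤ a ^ p := by
  have htangent : cfc (fun t : ℝ => (p * s ^ (p - 1)) * t + (s ^ p - p * s ^ (p - 1) * s)) a
      = (p * s ^ (p - 1)) • a + algebraMap ℝ A (s ^ p - p * s ^ (p - 1) * s) := by
    rw [cfc_add_const _ _ a, cfc_const_mul _ _ a, cfc_id' ℝ a]
  rw [← htangent, CFC.rpow_eq_cfc_real ha]
  refine cfc_mono (fun t ht => ?_) (hg := (Real.continuous_rpow_const (by linarith)).continuousOn)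
  have := Real.add_mul_sub_le_rpow hs (spectrum_nonneg_of_nonneg ha ht) hp
  linarith

end CStarAlgebra

section HilbertSpace

variable {H : Type*} [NormedAddCommGroup H] [InnerProductSpace ℂ H]

theorem ContinuousLinearMap.re_inner_le_re_inner_of_le {S T : H →L[ℂ] H} (h : S ≤ T) (x : H) :
    re ⟪S x, x⟫_ℂ ≤ re ⟪T x, x⟫_ℂ := by
  have := ((le_def S T).mp h).re_inner_nonneg_left x
  rwa [sub_apply, inner_sub_left, map_sub, sub_nonneg] at this

theorem ContinuousLinearMap.re_inner_smul_add_algebraMap (T : H →L[ℂ] H) (c d : ℝ) (x : H) :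
    re ⟪(c • T + algebraMap ℝ (H →L[ℂ] H) d) x, x⟫_ℂ = c * re ⟪T x, x⟫_ℂ + d * ‖x‖ ^ 2 := by
  rw [Algebra.algebraMap_eq_smul_one, add_apply, smul_apply, smul_apply, one_apply_eq_self,
    inner_add_left, map_add, real_smul_eq_coe_smul (K := ℂ), real_smul_eq_coe_smul (K := ℂ),
    inner_smul_real_left, inner_smul_real_left, smul_re, smul_re, inner_self_eq_norm_sq]

theorem ContinuousLinearMap.re_inner_le_opNorm (T : H →L[ℂ] H) {x : H} (hx : ‖x‖ = 1) :
    re ⟪T x, x⟫_ℂ ≤ ‖T‖ :=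
  calc re ⟪T x, x⟫_ℂ ≤ ‖⟪T x, x⟫_ℂ‖ := re_le_norm _
    _ ≤ ‖T x‖ * ‖x‖ := norm_inner_le_norm _ _
    _ ≤ ‖T‖ := by simpa [hx] using T.le_opNorm x

theorem numRadius_rpow_le {T : H →L[ℂ] H} {q M : ℝ} (hq : 0 < q) (hM : 0 ≤ M)
    (h : ∀ x : H, ‖x‖ = 1 → ‖⟪T x, x⟫_ℂ‖ ^ q ≤ M) : numRadius T ^ q ≤ M := by
  have hsup : numRadius T ≤ M ^ q⁻¹ := Real.iSup_le (fun x => by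
    rw [← Real.rpow_le_rpow_iff (norm_nonneg _) (by positivity) hq,
      Real.rpow_inv_rpow hM hq.ne']
    exact h x x.2) (by positivity)
  calc numRadius T ^ q ≤ (M ^ q⁻¹) ^ q :=
        Real.rpow_le_rpow (Real.iSup_nonneg fun _ => norm_nonneg _) hsup hq.le
    _ = M := Real.rpow_inv_rpow hM hq.ne'

variable [CompleteSpace H]

theorem opAbs_rpow_two_mul (T : H →L[ℂ] H) {q : ℝ} (hq : 0 ≤ q) :
    opAbs T ^ (2 * q) = (adjoint T * T) ^ q := by
  have hpos : 0 ≤ adjoint T * T := by rw [← star_eq_adjoint]; exact star_mul_self_nonneg T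
  rw [opAbs, CFC.sqrt_eq_rpow, CFC.rpow_rpow_of_exponent_nonneg _ _ _ (by norm_num) (by linarith)]
  congr 1; ring

theorem ContinuousLinearMap.re_inner_rpow_le {T : H →L[ℂ] H} (hT : 0 ≤ T) {p : ℝ} (hp : 1 ≤ p)
    {x : H} (hx : ‖x‖ = 1) : re ⟪T x, x⟫_ℂ ^ p ≤ re ⟪(T ^ p) x, x⟫_ℂ := by
  set s := re ⟪T x, x⟫_ℂ
  have hs : 0 ≤ s := ((nonneg_iff_isPositive T).mp hT).re_inner_nonneg_left x
  -- evaluate the tangent line to `t ↦ t ^ p` at `s` in the state `⟪· x, x⟫`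
  have := re_inner_le_re_inner_of_le (CFC.smul_add_algebraMap_le_rpow hT hs hp) x
  rwa [re_inner_smul_add_algebraMap, hx, one_pow, mul_one, add_sub_cancel] at this

theorem norm_inner_adjoint_mul_rpow_le (A B : H →L[ℂ] H) {q : ℝ} (hq : 1 ≤ q) {x : H}
    (hx : ‖x‖ = 1) : ‖⟪(adjoint B * A) x, x⟫_ℂ‖ ^ q ≤
      (re ⟪((adjoint A * A) ^ q) x, x⟫_ℂ + re ⟪((adjoint B * B) ^ q) x, x⟫_ℂ) / 2 := by
  have hnorm_sq (T : H →L[ℂ] H) : ‖T x‖ ^ 2 = re ⟪(adjoint T * T) x, x⟫_ℂ :=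
    apply_norm_sq_eq_inner_adjoint_left T x
  have hmccarthy (T : H →L[ℂ] H) : (‖T x‖ ^ 2) ^ q ≤ re ⟪((adjoint T * T) ^ q) x, x⟫_ℂ := by
    rw [hnorm_sq]
    exact re_inner_rpow_le (by rw [← star_eq_adjoint]; exact star_mul_self_nonneg T) hq hx
  calc ‖⟪(adjoint B * A) x, x⟫_ℂ‖ ^ q = ‖⟪A x, B x⟫_ℂ‖ ^ q := by
        rw [mul_apply_eq_comp, adjoint_inner_left]
    _ ≤ (‖A x‖ * ‖B x‖) ^ q :=
        Real.rpow_le_rpow (norm_nonneg _) (norm_inner_le_norm _ _) (by linarith)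
    _ ≤ ((‖A x‖ ^ 2) ^ q + (‖B x‖ ^ 2) ^ q) / 2 :=
        Real.mul_rpow_le_sq_rpow_add_sq_rpow_div_two (norm_nonneg _) (norm_nonneg _)
    _ ≤ _ := by linarith [hmccarthy A, hmccarthy B]

end HilbertSpace

theorem stmt_16 {H : Type*} [NormedAddCommGroup H] [InnerProductSpace ℂ H] [CompleteSpace H]
    (A B : H →L[ℂ] H) (r : ℝ) (hr : 1 ≤ r) :
    numRadius ((ContinuousLinearMap.adjoint B) * A) ^ (2 * r) ≤
      (1 / 2) * ‖CFC.rpow (opAbs A) (4 * r) + CFC.rpow (opAbs B) (4 * r)‖ := by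
  have hq : 1 ≤ 2 * r := by linarith
  simp only [CFC.rpow_eq_pow]
  rw [show 4 * r = 2 * (2 * r) by ring, opAbs_rpow_two_mul A (by linarith),
    opAbs_rpow_two_mul B (by linarith)]
  refine numRadius_rpow_le (by linarith) (by positivity) fun x hx => ?_
  have hsum := re_inner_le_opNorm ((adjoint A * A) ^ (2 * r) + (adjoint B * B) ^ (2 * r)) hx
  rw [add_apply, inner_add_left, map_add] at hsum
  linarith [norm_inner_adjoint_mul_rpow_le A B hq hx]
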